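/- arXiv:1706.03976 — 2 statements merged into one kernel-verified Lean document; each statement's English description precedes it below -/
import Mathlib

section
/- Let h : ℝ → ℂ⁴ be a measurable vector-valued function satisfying h(−k) = conj(h(k)) for almost every k ∈ ℝ and the renormalisation relation h(k/λ) = (1/λ)·A(k/λ)·h(k) for almost every k ∈ ℝ. If there exists ε > 0 such that h(k) = 0 for almost every k ∈ [ε/λ, ε], then h(k) = 0 for almost every k ∈ ℝ. -/
/-
Away from the countable set where `p` vanishes, `A(k)` is invertible (its determinant is
`|p(k)|⁴`), so the renormalisation relation shows that, for almost every `k`, `h` vanishes at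
`λk` iff it vanishes at `k`. Lebesgue measure is quasi-invariant under dilations, so this
invariance iterates to all powers `λⁿ`, and vanishing on `[ε/λ, ε]` spreads to the dilates
`λⁿ[ε/λ, ε]`, which cover `(0, ∞)`. The symmetry `h(−k) = conj h(k)` then covers `(−∞, 0)`.
-/

open MeasureTheory Filter

/-- The Perron–Frobenius eigenvalue `λ = (1+√13)/2` of `M = [[1,1],[3,0]]`. -/
noncomputable def lam : ℝ := (1 + Real.sqrt 13) / 2

/-- `p(k) = e^{2πikλ} + e^{2πik(λ+1)} + e^{2πik(λ+2)}`. -/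
noncomputable def pfun (k : ℝ) : ℂ :=
  Complex.exp (((2 * Real.pi * k * lam : ℝ) : ℂ) * Complex.I) +
  Complex.exp (((2 * Real.pi * k * (lam + 1) : ℝ) : ℂ) * Complex.I) +
  Complex.exp (((2 * Real.pi * k * (lam + 2) : ℝ) : ℂ) * Complex.I)

/-- The Fourier matrix `B(k) = [[1,1],[p(k),0]]`. -/
noncomputable def Bmat (k : ℝ) : Matrix (Fin 2) (Fin 2) ℂ :=
  !![1, 1; pfun k, 0]

/-- `A(k) = B(k) ⊗ conj(B(k))`, i.e. `A_{(i,j),(m,n)}(k) = B_{im}(k)·conj(B_{jn}(k))`. -/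
noncomputable def Amat (k : ℝ) : Matrix (Fin 2 × Fin 2) (Fin 2 × Fin 2) ℂ :=
  fun ij mn => Bmat k ij.1 mn.1 * (starRingEnd ℂ) (Bmat k ij.2 mn.2)

open Set
open scoped Kronecker

namespace Real

lemma ae_comp_mul_left {a : ℝ} (ha : a ≠ 0) {P : ℝ → Prop} (hP : ∀ᵐ x : ℝ, P x) :
    ∀ᵐ x : ℝ, P (a * x) :=
  (Measure.quasiMeasurePreserving_smul volume ha).ae hP

lemma ae_zpow_mul_iff_of_ae_mul_iff {c : ℝ} (hc : c ≠ 0) {P : ℝ → Prop}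
    (hP : ∀ᵐ x : ℝ, P (c * x) ↔ P x) (n : ℤ) : ∀ᵐ x : ℝ, P (c ^ n * x) ↔ P x := by
  induction n using Int.induction_on with
  | zero => simp
  | succ n ih =>
    filter_upwards [ih, ae_comp_mul_left (zpow_ne_zero n hc) hP] with x hn hstep
    rwa [zpow_add_one₀ hc, mul_comm _ c, mul_assoc, hstep]
  | pred n ih =>
    filter_upwards [ih, ae_comp_mul_left (zpow_ne_zero (-(n : ℤ) - 1) hc) hP] with x hn hstep
    rwa [← hstep, ← mul_assoc, ← zpow_one_add₀ hc, add_sub_cancel]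

lemma ae_pos_of_ae_Icc_of_ae_mul_iff {c ε : ℝ} (hc : 1 < c) (hε : 0 < ε) {P : ℝ → Prop}
    (hP : ∀ᵐ x : ℝ, P (c * x) ↔ P x) (hIcc : ∀ᵐ x ∂volume.restrict (Icc (ε / c) ε), P x) :
    ∀ᵐ x : ℝ, 0 < x → P x := by
  have hc0 : 0 < c := one_pos.trans hc
  have hIcc' : ∀ᵐ x : ℝ, x ∈ Icc (ε / c) ε → P x := (ae_restrict_iff' measurableSet_Icc).1 hIcc
  have hall : ∀ᵐ x : ℝ, ∀ n : ℤ,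
      (P (c ^ n * x) ↔ P x) ∧ (c ^ n * x ∈ Icc (ε / c) ε → P (c ^ n * x)) :=
    ae_all_iff.2 fun n => (ae_zpow_mul_iff_of_ae_mul_iff hc0.ne' hP n).and
      (ae_comp_mul_left (zpow_ne_zero n hc0.ne') hIcc')
  filter_upwards [hall] with x hx hx0
  -- `c ^ n ≤ ε / x < c ^ (n + 1)` puts `c ^ n * x` in `(ε / c, ε]`.
  obtain ⟨n, hlo, hhi⟩ := exists_mem_Ico_zpow (div_pos hε hx0) hc
  rw [le_div_iff₀ hx0] at hlo
  rw [div_lt_iff₀ hx0, zpow_add_one₀ hc0.ne', mul_right_comm, ← div_lt_iff₀ hc0] at hhi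
  exact (hx n).1.1 ((hx n).2 ⟨hhi.le, hlo⟩)

lemma ae_of_ae_pos_of_ae_neg_iff {P : ℝ → Prop} (hpos : ∀ᵐ x : ℝ, 0 < x → P x)
    (hneg : ∀ᵐ x : ℝ, P (-x) ↔ P x) : ∀ᵐ x : ℝ, P x := by
  have hpos' : ∀ᵐ x : ℝ, 0 < -x → P (-x) := by
    simpa only [neg_one_mul] using ae_comp_mul_left (neg_ne_zero.2 one_ne_zero) hpos
  filter_upwards [hpos, hpos', hneg, Measure.ae_ne volume 0] with x hx hx' hxneg hx0
  rcases hx0.lt_or_gt with hlt | hgt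
  · exact hxneg.1 (hx' (neg_pos.2 hlt))
  · exact hx hgt

end Real

lemma one_lt_lam : 1 < lam := by
  have : (1 : ℝ) < Real.sqrt 13 := by
    rw [show (1 : ℝ) = Real.sqrt 1 by simp]
    exact Real.sqrt_lt_sqrt (by norm_num) (by norm_num)
  unfold lam; linarith

lemma lam_ne_zero : lam ≠ 0 := (one_pos.trans one_lt_lam).ne'

lemma pfun_eq_exp_mul (k : ℝ) :
    pfun k = Complex.exp (((2 * Real.pi * k * (lam + 1) : ℝ) : ℂ) * Complex.I) *
      (1 + 2 * Complex.cos ((2 * Real.pi * k : ℝ) : ℂ)) := by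
  have hshift (a : ℝ) : Complex.exp (((2 * Real.pi * k * (lam + 1 + a) : ℝ) : ℂ) * Complex.I) =
      Complex.exp (((2 * Real.pi * k * (lam + 1) : ℝ) : ℂ) * Complex.I) *
        Complex.exp (((2 * Real.pi * k * a : ℝ) : ℂ) * Complex.I) := by
    rw [← Complex.exp_add]; push_cast; ring_nf
  have hlo := hshift (-1)
  have hhi := hshift 1
  push_cast at hlo hhi ⊢
  simp only [pfun, Complex.cos]
  push_cast
  ring_nf at hlo hhi ⊢
  linear_combination hlo + hhi

lemma exists_int_three_mul_eq_of_pfun_eq_zero {k : ℝ} (hp : pfun k = 0) :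
    ∃ n : ℤ, 3 * k = n := by
  rw [pfun_eq_exp_mul] at hp
  have hcos : (1 : ℂ) + 2 * Complex.cos ((2 * Real.pi * k : ℝ) : ℂ) = 0 :=
    (mul_eq_zero.1 hp).resolve_left (Complex.exp_ne_zero _)
  have hc : Real.cos (2 * Real.pi * k) = -(1 / 2) := by
    apply Complex.ofReal_injective
    push_cast at hcos ⊢
    linear_combination hcos / 2
  have h3 : Real.cos (3 * (2 * Real.pi * k)) = 1 := by
    rw [Real.cos_three_mul, hc]; norm_num
  obtain ⟨n, hn⟩ := (Real.cos_eq_one_iff _).1 h3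
  refine ⟨n, ?_⟩
  nlinarith [Real.pi_pos]

lemma ae_pfun_ne_zero : ∀ᵐ k : ℝ, pfun k ≠ 0 := by
  have hcount : {k : ℝ | pfun k = 0}.Countable := by
    refine (countable_range fun n : ℤ => (n : ℝ) / 3).mono fun k hk => ?_
    obtain ⟨n, hn⟩ := exists_int_three_mul_eq_of_pfun_eq_zero hk
    exact ⟨n, by simp only; linarith⟩
  exact hcount.ae_notMem volume

lemma Amat_eq_kronecker (k : ℝ) : Amat k = Bmat k ⊗ₖ (Bmat k).map (starRingEnd ℂ) := rfl

lemma det_Bmat (k : ℝ) : (Bmat k).det = -pfun k := by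
  simp [Bmat, Matrix.det_fin_two_of]

lemma det_Amat (k : ℝ) : (Amat k).det = pfun k ^ 2 * starRingEnd ℂ (pfun k) ^ 2 := by
  have hconj : ((Bmat k).map (starRingEnd ℂ)).det = starRingEnd ℂ (Bmat k).det :=
    (RingHom.map_det _ _).symm
  rw [Amat_eq_kronecker, Matrix.det_kronecker, hconj, det_Bmat]
  simp

lemma Amat_mulVec_eq_zero_iff {k : ℝ} (hp : pfun k ≠ 0) {v : Fin 2 × Fin 2 → ℂ} :
    (Amat k).mulVec v = 0 ↔ v = 0 := by
  refine ⟨Matrix.eq_zero_of_mulVec_eq_zero ?_, by rintro rfl; exact Matrix.mulVec_zero _⟩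
  rw [det_Amat]
  simpa using hp

theorem stmt3_general (h : ℝ → (Fin 2 × Fin 2 → ℂ))
    (hsym : ∀ᵐ k : ℝ, h (-k) = fun ij => (starRingEnd ℂ) (h k ij))
    (hren : ∀ᵐ k : ℝ, h (k / lam) = (lam : ℂ)⁻¹ • (Amat (k / lam)).mulVec (h k))
    (ε : ℝ) (hε : 0 < ε)
    (hzero : ∀ᵐ k ∂(volume.restrict (Set.Icc (ε / lam) ε)), h k = 0) :
    ∀ᵐ k : ℝ, h k = 0 := by
  have hscale : ∀ᵐ k : ℝ, h (lam * k) = 0 ↔ h k = 0 := by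
    filter_upwards [Real.ae_comp_mul_left lam_ne_zero hren, ae_pfun_ne_zero] with k hk hp
    rw [mul_div_cancel_left₀ k lam_ne_zero] at hk
    rw [hk, smul_eq_zero_iff_right (by simpa using lam_ne_zero), Amat_mulVec_eq_zero_iff hp]
  have hneg : ∀ᵐ k : ℝ, h (-k) = 0 ↔ h k = 0 := by
    filter_upwards [hsym] with k hk
    simp [hk, funext_iff]
  exact Real.ae_of_ae_pos_of_ae_neg_iff
    (Real.ae_pos_of_ae_Icc_of_ae_mul_iff one_lt_lam hε hscale hzero) hneg

/-- Let `h : ℝ → ℂ⁴` be measurable with `h(−k) = conj(h(k))` a.e. and satisfying the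
renormalisation relation `h(k/λ) = (1/λ)·A(k/λ)·h(k)` for a.e. `k ∈ ℝ`. If there is
`ε > 0` with `h = 0` a.e. on `[ε/λ, ε]`, then `h = 0` a.e. on `ℝ`. -/
theorem stmt3 (h : ℝ → (Fin 2 × Fin 2 → ℂ)) (hmeas : Measurable h)
    (hsym : ∀ᵐ k : ℝ, h (-k) = fun ij => (starRingEnd ℂ) (h k ij))
    (hren : ∀ᵐ k : ℝ, h (k / lam) = (lam : ℂ)⁻¹ • (Amat (k / lam)).mulVec (h k))
    (ε : ℝ) (hε : 0 < ε)
    (hzero : ∀ᵐ k ∂(volume.restrict (Set.Icc (ε / lam) ε)), h k = 0) :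
    ∀ᵐ k : ℝ, h k = 0 :=
  stmt3_general h hsym hren ε hε hzero
end

section
/- For every integer n ≥ 1 there exists a constant δ > 0 such that ‖B⁽ⁿ⁾(k)‖_F² ≥ δ holds for all k ∈ ℝ. Consequently, for each n ≥ 1 the function k ↦ log(‖B⁽ⁿ⁾(k)‖_F²) is Bohr almost periodic. -/
open Filter

/-- The outward matrix product `B⁽ⁿ⁾(k) = B(k)·B(λk)·…·B(λⁿ⁻¹k)`. -/
noncomputable def Bout (k : ℝ) : ℕ → Matrix (Fin 2) (Fin 2) ℂ
  | 0 => 1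
  | n + 1 => Bout k n * Bmat (lam ^ n * k)

/-- The squared Frobenius norm `‖M‖_F²` of a complex 2×2 matrix. -/
noncomputable def frobSq (M : Matrix (Fin 2) (Fin 2) ℂ) : ℝ :=
  ∑ i : Fin 2, ∑ j : Fin 2, ‖M i j‖ ^ 2

/-- A function `f : ℝ → ℝ` is Bohr almost periodic if it is continuous and, for every
`ε > 0`, the set of `ε`-almost periods is relatively dense in `ℝ`. -/
def IsBohrAP (f : ℝ → ℝ) : Prop :=
  Continuous f ∧
    ∀ ε : ℝ, 0 < ε → ∃ L : ℝ, 0 < L ∧ ∀ x₀ : ℝ,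
      ∃ t ∈ Set.Icc x₀ (x₀ + L), ∀ x : ℝ, |f (x - t) - f x| < ε

/-!
With `x_j = 𝐞 (λ ^ j k)` one has `p (λ ^ j k) = x_{j+1} (1 + x_j + x_j²)` and, since `λ² = λ + 3`,
`x_{j+2} = x_{j+1} x_j³`. Hence `B⁽ⁿ⁾(k)` is a continuous function of the point `(x₀, x₁)` of the
torus, which moves along a Kronecker flow by isometries. A continuous function on the compact
torus composed with such a flow is Bohr almost periodic, and it is bounded below by a positive
constant once it is positive on the whole torus.

Positivity means that the matrix product never vanishes. Up to the first zero `j` of `p` it is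
invertible; `B` at that zero has rank one, and from then on the product is a nonzero column times
the row `(s_{r+1}, s_r)` of a three-term recursion. At the zero, `x_j` is a cube root of unity, so
`x_{j+1+r} = y ^ g_r` with `y = x_{j+1}` and `g_{r+2} = g_{r+1} + 3 g_r`, and
`(y - 1) s_r = y ^ g_r - 1`. Consecutive `g_r` are coprime, so two consecutive zeros of `s` force
`y = 1`; but then `s_r = g_r > 0`.
-/

open Real FourierTransform Matrix

section AlmostPeriodic

variable {E : Type*} [PseudoMetricSpace E] {Φ : ℝ → E}

theorem exists_relativelyDense_almostPeriods (hΦ : TotallyBounded (Set.range Φ))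
    (hdist : ∀ a b c, dist (Φ (a + c)) (Φ (b + c)) = dist (Φ a) (Φ b)) {ε : ℝ} (hε : 0 < ε) :
    ∃ L : ℝ, 0 < L ∧ ∀ x₀ : ℝ, ∃ t ∈ Set.Icc x₀ (x₀ + L), ∀ x, dist (Φ (x - t)) (Φ x) < ε := by
  obtain ⟨T, hTΦ, hT, hcover⟩ := Metric.finite_approx_of_totallyBounded hΦ ε hε
  choose u hu using fun y : T => hTΦ y.2
  have := hT.to_subtype
  obtain ⟨M, hM⟩ := Finite.exists_le fun y : T => |u y|
  refine ⟨2 * |M| + 1, by positivity, fun x₀ => ?_⟩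
  obtain ⟨y, hyT, hy⟩ := Set.mem_iUnion₂.1 (hcover (Set.mem_range_self (x₀ + |M|)))
  have huM := (hM ⟨y, hyT⟩).trans (le_abs_self M)
  set s := x₀ + |M|
  set v := u ⟨y, hyT⟩
  refine ⟨s - v, ⟨by linarith [le_abs_self v], by linarith [neg_abs_le v]⟩, fun x => ?_⟩
  calc dist (Φ (x - (s - v))) (Φ x) = dist (Φ (v + (x - s))) (Φ (s + (x - s))) := by
        ring_nf
    _ = dist y (Φ s) := by rw [hdist, hu]
    _ < ε := by rwa [dist_comm]

theorem isBohrAP_comp_of_translation_isometric {K : Set E} {g : E → ℝ} (hΦ : Continuous Φ)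
    (hK : IsCompact K) (hΦK : ∀ k, Φ k ∈ K)
    (hdist : ∀ a b c, dist (Φ (a + c)) (Φ (b + c)) = dist (Φ a) (Φ b)) (hg : ContinuousOn g K) :
    IsBohrAP fun k => g (Φ k) := by
  refine ⟨hg.comp_continuous hΦ hΦK, fun ε hε => ?_⟩
  obtain ⟨δ, hδ, hgδ⟩ :=
    Metric.uniformContinuousOn_iff.1 (hK.uniformContinuousOn_of_continuous hg) ε hε
  obtain ⟨L, hL, hper⟩ := exists_relativelyDense_almostPeriods
    (hK.totallyBounded.subset (Set.range_subset_iff.2 hΦK)) hdist hδ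
  refine ⟨L, hL, fun x₀ => ?_⟩
  obtain ⟨t, ht, htper⟩ := hper x₀
  exact ⟨t, ht, fun x => hgδ _ (hΦK _) _ (hΦK _) (htper x)⟩

end AlmostPeriodic

noncomputable section

section MatrixProduct

def bFactor (q : ℂ) : Matrix (Fin 2) (Fin 2) ℂ := !![1, 1; q, 0]

def bProd (q : ℕ → ℂ) : ℕ → Matrix (Fin 2) (Fin 2) ℂ
  | 0 => 1
  | m + 1 => bProd q m * bFactor (q m)

/-- `(rowSeq q (r + 1), rowSeq q r) = (1, 1) * bFactor (q 0) * ⋯ * bFactor (q (r - 1))`. -/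
def rowSeq (q : ℕ → ℂ) : ℕ → ℂ
  | 0 => 1
  | 1 => 1
  | r + 2 => rowSeq q (r + 1) + q r * rowSeq q r

variable (q : ℕ → ℂ)

theorem det_bProd (m : ℕ) : (bProd q m).det = ∏ i ∈ Finset.range m, -q i := by
  induction m with
  | zero => simp [bProd]
  | succ m ih => simp [bProd, bFactor, Finset.prod_range_succ, ih, det_fin_two_of]

theorem bProd_add_eq_vecMulVec {j : ℕ} (hj : q j = 0) (r : ℕ) :
    bProd q (j + 1 + r) = vecMulVec (bProd q j *ᵥ ![1, 0])
      ![rowSeq (fun i => q (j + 1 + i)) (r + 1), rowSeq (fun i => q (j + 1 + i)) r] := by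
  induction r with
  | zero =>
    have : bFactor 0 = vecMulVec ![1, 0] ![1, 1] := by
      ext a b; fin_cases a <;> fin_cases b <;> simp [bFactor]
    rw [add_zero, bProd, hj, this, mul_vecMulVec]
    simp [rowSeq]
  | succ r ih =>
    rw [← add_assoc, bProd, ih, vecMulVec_mul]
    congr 1
    ext a
    fin_cases a
    · simp [bFactor, rowSeq, vecMul, dotProduct]
      ring
    · simp [bFactor, vecMul, dotProduct]

theorem bProd_succ_ne_zero
    (hrow : ∀ j, q j = 0 → ∀ r, ¬(rowSeq (fun i => q (j + 1 + i)) r = 0 ∧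
      rowSeq (fun i => q (j + 1 + i)) (r + 1) = 0)) (m : ℕ) :
    bProd q (m + 1) ≠ 0 := by
  classical
  by_cases hzero : ∃ j, j ≤ m ∧ q j = 0
  · set j := Nat.find hzero
    obtain ⟨hjm, hj⟩ : j ≤ m ∧ q j = 0 := Nat.find_spec hzero
    have hdet : (bProd q j).det ≠ 0 := by
      rw [det_bProd, Finset.prod_ne_zero_iff]
      intro i hi
      have hij := Finset.mem_range.1 hi
      exact neg_ne_zero.2 fun h => Nat.find_min hzero hij ⟨hij.le.trans hjm, h⟩
    have hcol : bProd q j *ᵥ ![1, 0] ≠ 0 := fun h =>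
      hdet (exists_mulVec_eq_zero_iff.1 ⟨_, by simp [funext_iff], h⟩)
    have hrowj : ![rowSeq (fun i => q (j + 1 + i)) (m - j + 1),
        rowSeq (fun i => q (j + 1 + i)) (m - j)] ≠ 0 := fun h =>
      hrow j hj (m - j) ⟨congrFun h 1, congrFun h 0⟩
    rw [show m + 1 = j + 1 + (m - j) by omega, bProd_add_eq_vecMulVec q hj]
    exact vecMulVec_ne_zero hcol hrowj
  · simp only [not_exists, not_and] at hzero
    refine fun h => ?_
    have := congrArg det h
    rw [det_bProd, det_zero, Finset.prod_eq_zero_iff] at this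
    obtain ⟨i, hi, hqi⟩ := this
    exact hzero i (Finset.mem_range_succ_iff.1 hi) (neg_eq_zero.1 hqi)

end MatrixProduct

section CubeRootOrbit

def expSeq : ℕ → ℕ
  | 0 => 1
  | 1 => 1
  | r + 2 => expSeq (r + 1) + 3 * expSeq r

theorem expSeq_mod_three (r : ℕ) : expSeq r % 3 = 1 := by
  induction r using Nat.twoStepInduction with
  | zero => rfl
  | one => rfl
  | more r _ ih => simp only [expSeq]; omega

theorem expSeq_pos (r : ℕ) : 0 < expSeq r :=
  Nat.pos_of_ne_zero fun h => by simpa [h] using expSeq_mod_three r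

theorem coprime_expSeq_succ (r : ℕ) : (expSeq r).Coprime (expSeq (r + 1)) := by
  induction r with
  | zero => decide
  | succ r ih =>
    have h3 : (expSeq (r + 1)).Coprime 3 := by
      rw [Nat.coprime_comm, Nat.Prime.coprime_iff_not_dvd Nat.prime_three,
        Nat.dvd_iff_mod_eq_zero, expSeq_mod_three]
      decide
    rw [show expSeq (r + 1 + 1) = expSeq (r + 1) + 3 * expSeq r from rfl,
      Nat.coprime_self_add_right]
    exact h3.mul_right ih.symm

variable {x : ℕ → ℂ}

theorem pow_expSeq_of_pow_three_eq_one (hrec : ∀ l, x (l + 2) = x (l + 1) * x l ^ 3) {j : ℕ}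
    (hj : x j ^ 3 = 1) (r : ℕ) : x (j + 1 + r) = x (j + 1) ^ expSeq r := by
  induction r using Nat.twoStepInduction with
  | zero => simp [expSeq]
  | one => rw [show j + 1 + 1 = j + 2 by ring, hrec, hj]; simp [expSeq]
  | more r ih₀ ih₁ =>
    rw [show j + 1 + (r + 2) = j + 1 + r + 2 by ring, hrec, add_assoc (j + 1), ih₁, ih₀,
      expSeq, pow_add, pow_mul, ← pow_mul, ← pow_mul, mul_comm 3]

theorem sub_one_mul_rowSeq {y : ℂ} {q : ℕ → ℂ}
    (hq : ∀ r, q r = y ^ expSeq (r + 1) * (1 + y ^ expSeq r + (y ^ expSeq r) ^ 2)) (r : ℕ) :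
    (y - 1) * rowSeq q r = y ^ expSeq r - 1 := by
  induction r using Nat.twoStepInduction with
  | zero => simp [rowSeq, expSeq]
  | one => simp [rowSeq, expSeq]
  | more r ih₀ ih₁ =>
    rw [rowSeq, mul_add, ih₁, mul_left_comm, ih₀, hq, expSeq, pow_add, pow_mul]
    ring

theorem rowSeq_eq_expSeq {q : ℕ → ℂ} (hq : ∀ r, q r = 3) (r : ℕ) : rowSeq q r = expSeq r := by
  induction r using Nat.twoStepInduction with
  | zero => simp [rowSeq, expSeq]
  | one => simp [rowSeq, expSeq]
  | more r ih₀ ih₁ => simp [rowSeq, expSeq, ih₀, ih₁, hq]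

theorem not_rowSeq_eq_zero_and {y : ℂ} {q : ℕ → ℂ}
    (hq : ∀ r, q r = y ^ expSeq (r + 1) * (1 + y ^ expSeq r + (y ^ expSeq r) ^ 2)) (r : ℕ) :
    ¬(rowSeq q r = 0 ∧ rowSeq q (r + 1) = 0) := by
  rintro ⟨h₀, h₁⟩
  have hy : y = 1 := by
    refine (pow_eq_one_iff_of_coprime (coprime_expSeq_succ r)).1 ⟨?_, ?_⟩
    · linear_combination -(sub_one_mul_rowSeq hq r) + (y - 1) * h₀
    · linear_combination -(sub_one_mul_rowSeq hq (r + 1)) + (y - 1) * h₁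
  have h3 : ∀ r, q r = 3 := fun r => by rw [hq, hy]; norm_num
  rw [rowSeq_eq_expSeq h3] at h₀
  exact (expSeq_pos r).ne' (by exact_mod_cast h₀)

def pCoeff (x : ℕ → ℂ) (j : ℕ) : ℂ := x (j + 1) * (1 + x j + x j ^ 2)

theorem bProd_pCoeff_succ_ne_zero (hx : ∀ l, x l ≠ 0)
    (hrec : ∀ l, x (l + 2) = x (l + 1) * x l ^ 3) (m : ℕ) : bProd (pCoeff x) (m + 1) ≠ 0 := by
  refine bProd_succ_ne_zero _ (fun j hj => not_rowSeq_eq_zero_and (y := x (j + 1)) fun r => ?_) m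
  have hcube : x j ^ 3 = 1 := by
    have h : 1 + x j + x j ^ 2 = 0 := (mul_eq_zero.1 hj).resolve_left (hx (j + 1))
    linear_combination (x j - 1) * h
  simp only [pCoeff, add_assoc (j + 1), ← pow_expSeq_of_pow_three_eq_one hrec hcube]

end CubeRootOrbit

section Torus

def orbitSeq (z : ℂ × ℂ) : ℕ → ℂ
  | 0 => z.1
  | 1 => z.2
  | j + 2 => orbitSeq z (j + 1) * orbitSeq z j ^ 3

theorem continuous_orbitSeq (j : ℕ) : Continuous fun z => orbitSeq z j := by
  induction j using Nat.twoStepInduction with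
  | zero => exact continuous_fst
  | one => exact continuous_snd
  | more j ih₀ ih₁ => exact ih₁.mul (ih₀.pow 3)

theorem orbitSeq_ne_zero {z : ℂ × ℂ} (h₁ : z.1 ≠ 0) (h₂ : z.2 ≠ 0) (j : ℕ) :
    orbitSeq z j ≠ 0 := by
  induction j using Nat.twoStepInduction with
  | zero => exact h₁
  | one => exact h₂
  | more j ih₀ ih₁ => exact mul_ne_zero ih₁ (pow_ne_zero 3 ih₀)

theorem continuous_pCoeff_orbitSeq (i : ℕ) : Continuous fun z => pCoeff (orbitSeq z) i :=
  (continuous_orbitSeq (i + 1)).mul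
    ((continuous_const.add (continuous_orbitSeq i)).add ((continuous_orbitSeq i).pow 2))

theorem continuous_bProd {Z : Type*} [TopologicalSpace Z] {q : Z → ℕ → ℂ}
    (hq : ∀ i, Continuous fun z => q z i) (m : ℕ) : Continuous fun z => bProd (q z) m := by
  induction m with
  | zero => exact continuous_const
  | succ m ih =>
    refine ih.matrix_mul (continuous_pi fun a => continuous_pi fun b => ?_)
    fin_cases a <;> fin_cases b <;> simp [bFactor, hq m, continuous_const]

theorem continuous_frobSq : Continuous frobSq := by
  unfold frobSq
  fun_prop

theorem frobSq_pos {M : Matrix (Fin 2) (Fin 2) ℂ} (hM : M ≠ 0) : 0 < frobSq M := by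
  obtain ⟨i, j, hij⟩ : ∃ i j, M i j ≠ 0 := by
    by_contra! h
    exact hM (Matrix.ext h)
  calc 0 < ‖M i j‖ ^ 2 := by positivity
    _ ≤ ∑ j', ‖M i j'‖ ^ 2 := Finset.single_le_sum (f := fun j' => ‖M i j'‖ ^ 2)
          (fun _ _ => by positivity) (Finset.mem_univ j)
    _ ≤ frobSq M := Finset.single_le_sum (f := fun i => ∑ j', ‖M i j'‖ ^ 2)
          (fun _ _ => by positivity) (Finset.mem_univ i)

def torus : Set (ℂ × ℂ) := Metric.sphere 0 1 ×ˢ Metric.sphere 0 1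

theorem isCompact_torus : IsCompact torus := (isCompact_sphere 0 1).prod (isCompact_sphere 0 1)

theorem frobSq_bProd_pos_of_mem_torus {z : ℂ × ℂ} (hz : z ∈ torus) (m : ℕ) :
    0 < frobSq (bProd (pCoeff (orbitSeq z)) (m + 1)) := by
  have hne : ∀ w : ℂ, w ∈ Metric.sphere (0 : ℂ) 1 → w ≠ 0 := fun w hw =>
    ne_zero_of_mem_unit_sphere ⟨w, hw⟩
  exact frobSq_pos (bProd_pCoeff_succ_ne_zero (orbitSeq_ne_zero (hne _ hz.1) (hne _ hz.2))
    (fun _ => rfl) m)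

end Torus

section KroneckerFlow

theorem lam_sq : lam ^ 2 = lam + 3 := by
  have h13 : Real.sqrt 13 ^ 2 = 13 := Real.sq_sqrt (by norm_num)
  unfold lam
  linear_combination h13 / 4

theorem fourierChar_add_coe (a b : ℝ) : (𝐞 (a + b) : ℂ) = 𝐞 a * 𝐞 b := by
  rw [AddChar.map_add_eq_mul, Circle.coe_mul]

def kroneckerFlow (k : ℝ) : ℂ × ℂ := (𝐞 k, 𝐞 (lam * k))

theorem continuous_kroneckerFlow : Continuous kroneckerFlow := by
  unfold kroneckerFlow
  fun_prop

theorem kroneckerFlow_mem_torus (k : ℝ) : kroneckerFlow k ∈ torus := by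
  simp [kroneckerFlow, torus, Circle.norm_coe]

theorem dist_kroneckerFlow_add (a b c : ℝ) :
    dist (kroneckerFlow (a + c)) (kroneckerFlow (b + c)) =
      dist (kroneckerFlow a) (kroneckerFlow b) := by
  have h : ∀ u v w : ℝ, dist (𝐞 (u + w) : ℂ) (𝐞 (v + w)) = dist (𝐞 u : ℂ) (𝐞 v) := by
    intro u v w
    rw [dist_eq_norm, dist_eq_norm, fourierChar_add_coe, fourierChar_add_coe, ← sub_mul,
      norm_mul, Circle.norm_coe, mul_one]
  simp only [kroneckerFlow, Prod.dist_eq, mul_add, h]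

theorem orbitSeq_kroneckerFlow (k : ℝ) (j : ℕ) :
    orbitSeq (kroneckerFlow k) j = 𝐞 (lam ^ j * k) := by
  induction j using Nat.twoStepInduction with
  | zero => simp [orbitSeq, kroneckerFlow]
  | one => simp [orbitSeq, kroneckerFlow]
  | more j ih₀ ih₁ =>
    have h : lam ^ (j + 2) * k = lam ^ (j + 1) * k + 3 • (lam ^ j * k) := by
      rw [nsmul_eq_mul, pow_add, lam_sq]; ring
    rw [orbitSeq, ih₀, ih₁, h, AddChar.map_add_eq_mul, AddChar.map_nsmul_eq_pow]
    push_cast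
    ring

theorem pfun_lam_pow_mul (k : ℝ) (m : ℕ) :
    pfun (lam ^ m * k) = pCoeff (orbitSeq (kroneckerFlow k)) m := by
  have h : ∀ c : ℕ, Complex.exp (((2 * π * (lam ^ m * k) * (lam + c) : ℝ) : ℂ) * Complex.I)
      = 𝐞 (lam ^ (m + 1) * k) * 𝐞 (lam ^ m * k) ^ c := fun c => by
    rw [← Circle.coe_pow, ← AddChar.map_nsmul_eq_pow, ← fourierChar_add_coe, fourierChar_apply,
      nsmul_eq_mul]
    congr 3
    ring
  have h₀ := h 0
  have h₁ := h 1
  have h₂ := h 2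
  simp only [Nat.cast_zero, Nat.cast_one, Nat.cast_ofNat, add_zero] at h₀ h₁ h₂
  rw [pfun, pCoeff, orbitSeq_kroneckerFlow, orbitSeq_kroneckerFlow, h₀, h₁, h₂]
  ring

theorem Bout_eq_bProd (k : ℝ) (n : ℕ) :
    Bout k n = bProd (pCoeff (orbitSeq (kroneckerFlow k))) n := by
  induction n with
  | zero => rfl
  | succ n ih => rw [Bout, bProd, ih, Bmat, pfun_lam_pow_mul, bFactor]

end KroneckerFlow

end

/-- For every `n ≥ 1` there is `δ > 0` with `‖B⁽ⁿ⁾(k)‖_F² ≥ δ` for all `k ∈ ℝ`;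
consequently `k ↦ log(‖B⁽ⁿ⁾(k)‖_F²)` is Bohr almost periodic. -/
theorem stmt13 (n : ℕ) (hn : 1 ≤ n) :
    (∃ δ : ℝ, 0 < δ ∧ ∀ k : ℝ, δ ≤ frobSq (Bout k n)) ∧
    IsBohrAP fun k => Real.log (frobSq (Bout k n)) := by
  obtain ⟨m, rfl⟩ : ∃ m, n = m + 1 := ⟨n - 1, by omega⟩
  set F : ℂ × ℂ → ℝ := fun z => frobSq (bProd (pCoeff (orbitSeq z)) (m + 1))
  have hF : Continuous F :=
    continuous_frobSq.comp (continuous_bProd continuous_pCoeff_orbitSeq _)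
  have hFpos : ∀ z ∈ torus, 0 < F z := fun z hz => frobSq_bProd_pos_of_mem_torus hz m
  obtain ⟨z₀, hz₀, hmin⟩ :=
    isCompact_torus.exists_isMinOn ⟨(1, 1), by simp [torus]⟩ hF.continuousOn
  have hlogF : ContinuousOn (fun z => Real.log (F z)) torus :=
    hF.continuousOn.log fun z hz => (hFpos z hz).ne'
  simp only [Bout_eq_bProd]
  exact ⟨⟨F z₀, hFpos z₀ hz₀, fun k => hmin (kroneckerFlow_mem_torus k)⟩,
    isBohrAP_comp_of_translation_isometric (g := fun z => Real.log (F z))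
      continuous_kroneckerFlow isCompact_torus kroneckerFlow_mem_torus dist_kroneckerFlow_add hlogF⟩
end
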